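/- arXiv:0901.1612 — 4 statements merged into one kernel-verified Lean document; each statement's English description precedes it below -/
import Mathlib

section
/- Let G be the group with presentation ⟨P, Q, R, B | [P,Q]=[Q,R]=[R,P]=B, [P,B]=[Q,B]=[R,B]=1⟩. Then every element of G can be written uniquely in the form P^p Q^q R^r B^μ for integers p, q, r, μ. -/
open FreeGroup
open scoped commutatorElement

/-- The relators of the group `G = ⟨P,Q,R,B | [P,Q]=[Q,R]=[R,P]=B, B central⟩`,
with generators indexed by `Fin 4` as `P = 0`, `Q = 1`, `R = 2`, `B = 3`. -/
def H3rels : Set (FreeGroup (Fin 4)) :=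
  { ⁅of (0 : Fin 4), of (1 : Fin 4)⁆ * (of (3 : Fin 4))⁻¹, ⁅of (1 : Fin 4), of (2 : Fin 4)⁆ * (of (3 : Fin 4))⁻¹, ⁅of (2 : Fin 4), of (0 : Fin 4)⁆ * (of (3 : Fin 4))⁻¹,
    ⁅of (0 : Fin 4), of (3 : Fin 4)⁆, ⁅of (1 : Fin 4), of (3 : Fin 4)⁆, ⁅of (2 : Fin 4), of (3 : Fin 4)⁆ }

/-- The group `G = H(3)` of link-homotopy classes of three-component string links. -/
abbrev H3 : Type := PresentedGroup H3rels

def H3.P : H3 := PresentedGroup.of (0 : Fin 4)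
def H3.Q : H3 := PresentedGroup.of (1 : Fin 4)
def H3.R : H3 := PresentedGroup.of (2 : Fin 4)
def H3.B : H3 := PresentedGroup.of (3 : Fin 4)

/-!
Normal words `P^p Q^q R^r B^μ` are closed under left multiplication by powers of the
generators: since every commutator of generators is a power of the central element `B`,
`⁅x^m, y^n⁆ = ⁅x, y⁆^(m n)`, so moving `Q^n` or `R^n` past the `P`- and `Q`-powers of a
normal word only changes its `B`-exponent. Hence every element has a normal form.
For uniqueness, `ℤ⁴` with the multiplication these rewritings dictate is a group in which
the defining relations hold, and the induced homomorphism reads the exponents back off a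
normal word.
-/

section Commutator

variable {G : Type*} [Group G] {x y : G}

theorem commutatorElement_zpow_right (h : Commute ⁅x, y⁆ y) (n : ℤ) :
    ⁅x, y ^ n⁆ = ⁅x, y⁆ ^ n := by
  have hconj : x * y * x⁻¹ = ⁅x, y⁆ * y := by rw [commutatorElement_def]; group
  rw [commutatorElement_def, ← conj_zpow, hconj, h.mul_zpow, mul_inv_cancel_right]

theorem commutatorElement_zpow_left (h : Commute ⁅x, y⁆ x) (m : ℤ) :
    ⁅x ^ m, y⁆ = ⁅x, y⁆ ^ m := by
  have h' : Commute ⁅y, x⁆ x := by rw [← commutatorElement_inv]; exact h.inv_left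
  rw [← commutatorElement_inv, commutatorElement_zpow_right h', ← commutatorElement_inv,
    inv_zpow, inv_inv]

theorem commutatorElement_zpow_zpow (hx : Commute ⁅x, y⁆ x) (hy : Commute ⁅x, y⁆ y)
    (m n : ℤ) :
    ⁅x ^ m, y ^ n⁆ = ⁅x, y⁆ ^ (m * n) := by
  have hxn : Commute ⁅x, y ^ n⁆ x := by
    rw [commutatorElement_zpow_right hy]; exact hx.zpow_left n
  rw [commutatorElement_zpow_left hxn, commutatorElement_zpow_right hy, ← zpow_mul, mul_comm]

theorem zpow_mul_zpow_of_commute_commutatorElement (hx : Commute ⁅x, y⁆ x)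
    (hy : Commute ⁅x, y⁆ y) (m n : ℤ) :
    x ^ m * y ^ n = ⁅x, y⁆ ^ (m * n) * y ^ n * x ^ m := by
  rw [← commutatorElement_zpow_zpow hx hy, commutatorElement_def]; group

end Commutator

namespace H3

@[ext]
structure NormalForm where
  p : ℤ
  q : ℤ
  r : ℤ
  μ : ℤ

namespace NormalForm

/-- Rewriting `P^p Q^q R^r · P^p' Q^q' R^r'` into a normal word moves `P^p'` past `R^r` and
`Q^q`, and `Q^q'` past `R^r`, which produces `B^(r p')`, `B^(-q p')` and `B^(-r q')`. -/
instance : Mul NormalForm :=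
  ⟨fun a b => ⟨a.p + b.p, a.q + b.q, a.r + b.r,
    a.μ + b.μ + a.r * b.p - a.q * b.p - a.r * b.q⟩⟩

instance : One NormalForm := ⟨⟨0, 0, 0, 0⟩⟩

instance : Inv NormalForm :=
  ⟨fun a => ⟨-a.p, -a.q, -a.r, -a.μ + a.r * a.p - a.q * a.p - a.r * a.q⟩⟩

@[simp] lemma mul_def (a b : NormalForm) :
    a * b = ⟨a.p + b.p, a.q + b.q, a.r + b.r,
      a.μ + b.μ + a.r * b.p - a.q * b.p - a.r * b.q⟩ := rfl

@[simp] lemma one_def : (1 : NormalForm) = ⟨0, 0, 0, 0⟩ := rfl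

@[simp] lemma inv_def (a : NormalForm) :
    a⁻¹ = ⟨-a.p, -a.q, -a.r, -a.μ + a.r * a.p - a.q * a.p - a.r * a.q⟩ := rfl

instance : Group NormalForm where
  mul_assoc a b c := by ext <;> simp <;> ring
  one_mul a := by ext <;> simp
  mul_one a := by ext <;> simp
  inv_mul_cancel a := by ext <;> simp; ring

lemma zpow_eq_of_mul_eq_zero (a : NormalForm) (hqp : a.q * a.p = 0)
    (hrp : a.r * a.p = 0) (hrq : a.r * a.q = 0) (n : ℤ) :
    a ^ n = ⟨n * a.p, n * a.q, n * a.r, n * a.μ⟩ := by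
  induction n using Int.induction_on with
  | zero => simp
  | succ k ih =>
    rw [zpow_add_one, ih, mul_def, mk.injEq]
    refine ⟨by ring, by ring, by ring, by linear_combination k * hrp - k * hqp - k * hrq⟩
  | pred k ih =>
    rw [zpow_sub_one, ih, inv_def, mul_def, mk.injEq]
    refine ⟨by ring, by ring, by ring, ?_⟩
    linear_combination (1 + k) * hrp - (1 + k) * hqp - (1 + k) * hrq

def gen : Fin 4 → NormalForm :=
  ![⟨1, 0, 0, 0⟩, ⟨0, 1, 0, 0⟩, ⟨0, 0, 1, 0⟩, ⟨0, 0, 0, 1⟩]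

lemma lift_gen_eq_one : ∀ r ∈ H3rels, FreeGroup.lift gen r = 1 := by
  simp only [H3rels, Set.mem_insert_iff, Set.mem_singleton_iff, forall_eq_or_imp, forall_eq]
  refine ⟨?_, ?_, ?_, ?_, ?_, ?_⟩ <;> ext <;> simp [gen, commutatorElement_def]

end NormalForm

lemma commutatorElement_P_Q : ⁅P, Q⁆ = B :=
  PresentedGroup.mk_eq_mk_of_mul_inv_mem (rels := H3rels) (x := ⁅of (0 : Fin 4), of 1⁆)
    (by simp [H3rels])

lemma commutatorElement_Q_R : ⁅Q, R⁆ = B :=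
  PresentedGroup.mk_eq_mk_of_mul_inv_mem (rels := H3rels) (x := ⁅of (1 : Fin 4), of 2⁆)
    (by simp [H3rels])

lemma commutatorElement_R_P : ⁅R, P⁆ = B :=
  PresentedGroup.mk_eq_mk_of_mul_inv_mem (rels := H3rels) (x := ⁅of (2 : Fin 4), of 0⁆)
    (by simp [H3rels])

lemma B_commute (g : H3) : Commute B g := by
  have hrel {i : Fin 4} (hi : ⁅of i, of 3⁆ ∈ H3rels) : Commute (PresentedGroup.of i : H3) B :=
    commutatorElement_eq_one_iff_commute.1 (PresentedGroup.one_of_mem hi)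
  have hgen (i : Fin 4) : Commute (PresentedGroup.of i : H3) B := by
    fin_cases i
    · exact hrel (by simp [H3rels])
    · exact hrel (by simp [H3rels])
    · exact hrel (by simp [H3rels])
    · exact Commute.refl B
  exact (Subgroup.mem_centralizer_singleton_iff.1 <| PresentedGroup.generated_by H3rels _
    (fun i => Subgroup.mem_centralizer_singleton_iff.2 (hgen i)) g).symm

lemma commutatorElement_Q_P : ⁅Q, P⁆ = B ^ (-1 : ℤ) := by
  rw [← commutatorElement_inv, commutatorElement_P_Q, zpow_neg_one]

lemma commutatorElement_R_Q : ⁅R, Q⁆ = B ^ (-1 : ℤ) := by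
  rw [← commutatorElement_inv, commutatorElement_Q_R, zpow_neg_one]

lemma zpow_mul_zpow_of_commutatorElement_eq {x y : H3} {k : ℤ} (h : ⁅x, y⁆ = B ^ k)
    (m n : ℤ) :
    x ^ m * y ^ n = B ^ (k * (m * n)) * y ^ n * x ^ m := by
  have hc (g : H3) : Commute ⁅x, y⁆ g := h ▸ (B_commute g).zpow_left k
  rw [zpow_mul_zpow_of_commute_commutatorElement (hc x) (hc y), h, ← zpow_mul]

def ofNormalForm (a : NormalForm) : H3 := P ^ a.p * Q ^ a.q * R ^ a.r * B ^ a.μ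

lemma P_zpow_mul_ofNormalForm (n p q r μ : ℤ) :
    P ^ n * ofNormalForm ⟨p, q, r, μ⟩ = ofNormalForm ⟨n + p, q, r, μ⟩ := by
  simp only [ofNormalForm]; group

lemma Q_zpow_mul_ofNormalForm (n p q r μ : ℤ) :
    Q ^ n * ofNormalForm ⟨p, q, r, μ⟩ = ofNormalForm ⟨p, n + q, r, μ - n * p⟩ := by
  have hQP := zpow_mul_zpow_of_commutatorElement_eq commutatorElement_Q_P n p
  calc Q ^ n * ofNormalForm ⟨p, q, r, μ⟩ = Q ^ n * P ^ p * Q ^ q * R ^ r * B ^ μ := by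
        simp only [ofNormalForm]; group
    _ = B ^ (-1 * (n * p)) * (P ^ p * Q ^ (n + q) * R ^ r) * B ^ μ := by
        rw [hQP]; group
    _ = ofNormalForm ⟨p, n + q, r, μ - n * p⟩ := by
        rw [((B_commute _).zpow_left _).eq]; simp only [ofNormalForm]; group

lemma R_zpow_mul_ofNormalForm (n p q r μ : ℤ) :
    R ^ n * ofNormalForm ⟨p, q, r, μ⟩ =
      ofNormalForm ⟨p, q, n + r, μ + n * p - n * q⟩ := by
  have hRP := zpow_mul_zpow_of_commutatorElement_eq (k := 1)
    (by rw [commutatorElement_R_P, zpow_one]) n p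
  have hRQ := zpow_mul_zpow_of_commutatorElement_eq commutatorElement_R_Q n q
  calc R ^ n * ofNormalForm ⟨p, q, r, μ⟩ = R ^ n * P ^ p * Q ^ q * R ^ r * B ^ μ := by
        simp only [ofNormalForm]; group
    _ = B ^ (1 * (n * p)) * P ^ p * (R ^ n * Q ^ q) * R ^ r * B ^ μ := by rw [hRP]; group
    _ = B ^ (1 * (n * p)) * (P ^ p * B ^ (-1 * (n * q))) * Q ^ q * R ^ (n + r) *
          B ^ μ := by rw [hRQ]; group
    _ = B ^ (n * p - n * q) * (P ^ p * Q ^ q * R ^ (n + r)) * B ^ μ := by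
        rw [← ((B_commute (P ^ p)).zpow_left _).eq]; group
    _ = ofNormalForm ⟨p, q, n + r, μ + n * p - n * q⟩ := by
        rw [((B_commute _).zpow_left _).eq]; simp only [ofNormalForm]; group

lemma B_zpow_mul_ofNormalForm (n p q r μ : ℤ) :
    B ^ n * ofNormalForm ⟨p, q, r, μ⟩ = ofNormalForm ⟨p, q, r, n + μ⟩ := by
  rw [((B_commute _).zpow_left _).eq]; simp only [ofNormalForm]; group

lemma of_zpow_mul_mem_range_ofNormalForm (i : Fin 4) (n : ℤ) {g : H3}
    (hg : g ∈ Set.range ofNormalForm) :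
    PresentedGroup.of i ^ n * g ∈ Set.range ofNormalForm := by
  obtain ⟨⟨p, q, r, μ⟩, rfl⟩ := hg
  fin_cases i
  · exact ⟨_, (P_zpow_mul_ofNormalForm n p q r μ).symm⟩
  · exact ⟨_, (Q_zpow_mul_ofNormalForm n p q r μ).symm⟩
  · exact ⟨_, (R_zpow_mul_ofNormalForm n p q r μ).symm⟩
  · exact ⟨_, (B_zpow_mul_ofNormalForm n p q r μ).symm⟩

lemma ofNormalForm_surjective : Function.Surjective ofNormalForm := by
  intro g
  have hg : g ∈ Subgroup.closure (Set.range PresentedGroup.of) := by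
    rw [PresentedGroup.closure_range_of]; trivial
  induction hg using Subgroup.closure_induction_left with
  | one => exact ⟨1, by simp [ofNormalForm]⟩
  | mul_left x hx y _ ih =>
    obtain ⟨i, rfl⟩ := hx
    simpa using of_zpow_mul_mem_range_ofNormalForm i 1 ih
  | inv_mul_cancel x hx y _ ih =>
    obtain ⟨i, rfl⟩ := hx
    simpa using of_zpow_mul_mem_range_ofNormalForm i (-1) ih

def toNormalForm : H3 →* NormalForm := PresentedGroup.toGroup NormalForm.lift_gen_eq_one

lemma toNormalForm_ofNormalForm (a : NormalForm) : toNormalForm (ofNormalForm a) = a := by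
  simp [ofNormalForm, toNormalForm, P, Q, R, B, NormalForm.gen,
    NormalForm.zpow_eq_of_mul_eq_zero]

lemma ofNormalForm_injective : Function.Injective ofNormalForm :=
  Function.LeftInverse.injective toNormalForm_ofNormalForm

end H3

/-- Every element of `G = ⟨P,Q,R,B | [P,Q]=[Q,R]=[R,P]=B, B central⟩` can be written
uniquely in the form `P^p * Q^q * R^r * B^μ` with `p, q, r, μ ∈ ℤ`. -/
theorem H3_normal_form (g : H3) :
    ∃! pqrμ : ℤ × ℤ × ℤ × ℤ,
      g = H3.P ^ pqrμ.1 * H3.Q ^ pqrμ.2.1 * H3.R ^ pqrμ.2.2.1 * H3.B ^ pqrμ.2.2.2 := by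
  obtain ⟨a, rfl⟩ := H3.ofNormalForm_surjective g
  refine ⟨(a.p, a.q, a.r, a.μ), rfl, ?_⟩
  rintro ⟨p, q, r, μ⟩ h
  obtain rfl : a = ⟨p, q, r, μ⟩ := H3.ofNormalForm_injective h
  rfl
end

section
/- In the group G = ⟨P, Q, R, B | [P,Q]=[Q,R]=[R,P]=B, B central⟩, the subgroup generated by Q, R, B is isomorphic to the discrete Heisenberg group, i.e. it has presentation ⟨Q, R, B | [Q,R]=B, [Q,B]=[R,B]=1⟩. -/
/-!
Sending `P ↦ Q⁻¹R⁻¹` and `Q, R, B` to themselves respects the relations of `G`: in any group where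
`b = [q, r]` commutes with `q` and `r`, also `[q⁻¹r⁻¹, q] = [r, q⁻¹r⁻¹] = [q⁻¹, r⁻¹] = b`.
This gives a retraction of `G` onto the Heisenberg group along the obvious map
`Q, R, B ↦ Q, R, B` from the Heisenberg group to `G`, which is therefore injective; its image is
the subgroup generated by `Q, R, B`.
-/

open FreeGroup
open scoped commutatorElement

/-- The relators of the discrete Heisenberg group `⟨Q,R,B | [Q,R]=B, B central⟩`,
with generators indexed by `Fin 3` as `Q = 0`, `R = 1`, `B = 2`. -/
def HeisRels : Set (FreeGroup (Fin 3)) :=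
  { ⁅of (0 : Fin 3), of (1 : Fin 3)⁆ * (of (2 : Fin 3))⁻¹,
    ⁅of (0 : Fin 3), of (2 : Fin 3)⁆, ⁅of (1 : Fin 3), of (2 : Fin 3)⁆ }

/-- The discrete Heisenberg group, presented as `⟨Q,R,B | [Q,R]=B, [Q,B]=[R,B]=1⟩`. -/
abbrev Heis : Type := PresentedGroup HeisRels

section CommutatorInverse

variable {G : Type*} [Group G] {q r b : G}

theorem commutatorElement_inv_inv (hqr : ⁅q, r⁆ = b) (hq : Commute b q) (hr : Commute b r) :
    ⁅q⁻¹, r⁻¹⁆ = b := by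
  subst hqr
  calc ⁅q⁻¹, r⁻¹⁆ = q⁻¹ * (r⁻¹ * (⁅q, r⁆ * (r * q))) := by group
    _ = ⁅q, r⁆ := by rw [hr.left_comm, inv_mul_cancel_left, hq.eq, inv_mul_cancel_left]

theorem commutatorElement_inv_mul_inv_left (hqr : ⁅q, r⁆ = b) (hq : Commute b q)
    (hr : Commute b r) : ⁅q⁻¹ * r⁻¹, q⁆ = b := by
  rw [← commutatorElement_inv_inv hqr hq hr]; group

theorem commutatorElement_inv_mul_inv_right (hqr : ⁅q, r⁆ = b) (hq : Commute b q)
    (hr : Commute b r) : ⁅r, q⁻¹ * r⁻¹⁆ = b :=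
  calc ⁅r, q⁻¹ * r⁻¹⁆ = r * ⁅q⁻¹, r⁻¹⁆ * r⁻¹ := by group
    _ = b := by rw [commutatorElement_inv_inv hqr hq hr, ← hr.eq, mul_inv_cancel_right]

end CommutatorInverse

namespace Heis

def Q : Heis := PresentedGroup.of 0
def R : Heis := PresentedGroup.of 1
def B : Heis := PresentedGroup.of 2

theorem commutatorElement_Q_R : ⁅Q, R⁆ = B :=
  PresentedGroup.mk_eq_mk_of_mul_inv_mem (Or.inl rfl)

theorem commute_B_Q : Commute B Q :=
  (commutatorElement_eq_one_iff_commute.mp (PresentedGroup.one_of_mem (Or.inr (Or.inl rfl)))).symm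

theorem commute_B_R : Commute B R :=
  (commutatorElement_eq_one_iff_commute.mp (PresentedGroup.one_of_mem (Or.inr (Or.inr rfl)))).symm

-- `Fin.succ` renumbers `Q, R, B` as in `H3`, carrying the relators of `Heis` onto those of `H3`
-- that do not involve `P`.
def toH3 : Heis →* H3 :=
  PresentedGroup.map (FreeGroup.map Fin.succ) (by
    rintro _ (rfl | rfl | rfl) <;> simp [H3rels])

theorem toH3_of (i : Fin 3) : toH3 (PresentedGroup.of i) = PresentedGroup.of i.succ :=
  rfl

theorem range_toH3 : toH3.range = Subgroup.closure {H3.Q, H3.R, H3.B} := by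
  rw [MonoidHom.range_eq_map, ← PresentedGroup.closure_range_of, MonoidHom.map_closure,
    ← Set.range_comp]
  congr 1
  ext x
  simp [Fin.exists_fin_succ, toH3_of, H3.Q, H3.R, H3.B, eq_comm]

end Heis

def H3.toHeis : H3 →* Heis :=
  PresentedGroup.toGroup (f := ![Heis.Q⁻¹ * Heis.R⁻¹, Heis.Q, Heis.R, Heis.B]) (by
    rintro _ (rfl | rfl | rfl | rfl | rfl | rfl) <;>
      simp only [_root_.map_mul, _root_.map_inv, map_commutatorElement, FreeGroup.lift_apply_of,
        Matrix.cons_val_zero, Matrix.cons_val_one, Matrix.cons_val_two, Matrix.cons_val_three,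
        Matrix.head_cons, Matrix.tail_cons, mul_inv_eq_one, commutatorElement_eq_one_iff_commute]
    · exact commutatorElement_inv_mul_inv_left Heis.commutatorElement_Q_R Heis.commute_B_Q
        Heis.commute_B_R
    · exact Heis.commutatorElement_Q_R
    · exact commutatorElement_inv_mul_inv_right Heis.commutatorElement_Q_R Heis.commute_B_Q
        Heis.commute_B_R
    · exact (Heis.commute_B_Q.inv_right.mul_right Heis.commute_B_R.inv_right).symm
    · exact Heis.commute_B_Q.symm
    · exact Heis.commute_B_R.symm)

theorem H3.leftInverse_toHeis_toH3 : Function.LeftInverse H3.toHeis Heis.toH3 := by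
  suffices H3.toHeis.comp Heis.toH3 = MonoidHom.id Heis from DFunLike.congr_fun this
  ext i
  fin_cases i <;>
    simp [H3.toHeis, Heis.toH3_of, PresentedGroup.toGroup.of, Heis.Q, Heis.R, Heis.B]

/-- In `G = ⟨P,Q,R,B | [P,Q]=[Q,R]=[R,P]=B, B central⟩`, the subgroup generated by
`Q`, `R` and `B` is isomorphic to the discrete Heisenberg group
`⟨Q,R,B | [Q,R]=B, [Q,B]=[R,B]=1⟩`. -/
theorem H3_subgroup_QRB_iso_Heisenberg :
    Nonempty ((Subgroup.closure {H3.Q, H3.R, H3.B} : Subgroup H3) ≃* Heis) :=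
  ⟨(MulEquiv.subgroupCongr Heis.range_toH3.symm).trans
    (MonoidHom.ofLeftInverse H3.leftInverse_toHeis_toH3).symm⟩
end

section
/- Define F : S³ × S³ × S³ → ℝ³ by F(x,y,z) = (x·iy + y·iz + z·ix, x·jy + y·jz + z·jx, x·ky + y·kz + z·kx), where S³ is the unit sphere in the quaternions ℍ, i, j, k act by left multiplication, and · is the Euclidean dot product on ℝ⁴ ≅ ℍ. Then F(x,y,z) = 0 if and only if x, y, z are collinear in ℝ⁴ (in particular, F is nonzero whenever x, y, z are distinct points of S³ not all on a common line — equivalently, whenever x, y, z are pairwise distinct). -/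
open scoped Quaternion
noncomputable section

/-- The Euclidean dot product on `ℝ⁴ ≅ ℍ`. -/
def qdot (a b : ℍ[ℝ]) : ℝ := (a * star b).re

/-- The imaginary unit quaternions. -/
def qi : ℍ[ℝ] := ⟨0, 1, 0, 0⟩
def qj : ℍ[ℝ] := ⟨0, 0, 1, 0⟩
def qk : ℍ[ℝ] := ⟨0, 0, 0, 1⟩

/-- The map `F(x,y,z) = (x·iy + y·iz + z·ix, x·jy + y·jz + z·jx, x·ky + y·kz + z·kx)`. -/
def Fmap (x y z : ℍ[ℝ]) : ℝ × ℝ × ℝ :=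
  (qdot x (qi * y) + qdot y (qi * z) + qdot z (qi * x),
   qdot x (qj * y) + qdot y (qj * z) + qdot z (qj * x),
   qdot x (qk * y) + qdot y (qk * z) + qdot z (qk * x))

/-!
The three components of `F(x,y,z)` are the imaginary parts of `(y - x) * star (z - x)`. Since
`a * star b * b = ‖b‖² • a`, a product `a * star b` is real exactly when `a` and `b` are linearly
dependent over `ℝ`, which for `a = y - x`, `b = z - x` says that `x`, `y`, `z` are collinear.
Three distinct points of a sphere are never collinear.
-/

theorem collinear_iff_not_linearIndependent_vsub {k V P : Type*} [DivisionRing k]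
    [AddCommGroup V] [Module k V] [AddTorsor V P] (p₁ p₂ p₃ : P) :
    Collinear k ({p₁, p₂, p₃} : Set P) ↔ ¬LinearIndependent k ![p₂ -ᵥ p₁, p₃ -ᵥ p₁] := by
  rw [collinear_iff_not_affineIndependent_set,
    affineIndependent_iff_linearIndependent_vsub k _ (0 : Fin 3),
    ← linearIndependent_equiv (finSuccAboveEquiv (0 : Fin 3))]
  convert! Iff.rfl
  ext i
  fin_cases i <;> rfl

namespace Quaternion

variable {R : Type*}

theorem mul_star_mul_self [CommRing R] (a b : ℍ[R]) : a * star b * b = normSq b • a := by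
  rw [mul_assoc, star_mul_self, mul_coe_eq_smul]

theorem im_mul_star_eq_zero_iff [Field R] [LinearOrder R] [IsStrictOrderedRing R]
    {a b : ℍ[R]} : (a * star b).im = 0 ↔ ¬LinearIndependent R ![a, b] := by
  constructor
  · intro h hli
    obtain ⟨r, hr⟩ : ∃ r : R, a * star b = r := ⟨_, by rw [← re_add_im (a * star b), h, add_zero]⟩
    have hb : normSq b = 0 := by
      refine (LinearIndependent.pair_iff.1 hli _ (-r) ?_).1
      rw [← mul_star_mul_self, hr, coe_mul_eq_smul, neg_smul, add_neg_cancel]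
    exact hli.ne_zero 1 (normSq_eq_zero.1 hb)
  · intro hdep
    obtain ⟨s, t, hst, hne⟩ : ∃ s t : R, s • a + t • b = 0 ∧ (s = 0 → t ≠ 0) := by
      simpa [LinearIndependent.pair_iff] using hdep
    by_cases hs : s = 0
    · have hb : b = 0 := by simpa [hs, hne hs] using hst
      simp [hb]
    · have := congrArg (fun q => (q * star b).im) hst
      simpa [add_mul, self_mul_star, hs] using this

end Quaternion

theorem Fmap_eq (x y z : ℍ[ℝ]) :
    Fmap x y z = (((y - x) * star (z - x)).imI, ((y - x) * star (z - x)).imJ,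
      ((y - x) * star (z - x)).imK) := by
  simp only [Fmap, qdot, Prod.mk.injEq, Quaternion.re_mul, Quaternion.imI_mul,
    Quaternion.imJ_mul, Quaternion.imK_mul, Quaternion.re_star, Quaternion.imI_star,
    Quaternion.imJ_star, Quaternion.imK_star, Quaternion.re_sub, Quaternion.imI_sub,
    Quaternion.imJ_sub, Quaternion.imK_sub]
  simp only [qi, qj, qk]
  exact ⟨by ring, by ring, by ring⟩

theorem Fmap_eq_zero_iff (x y z : ℍ[ℝ]) :
    Fmap x y z = 0 ↔ ((y - x) * star (z - x)).im = 0 := by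
  simp [Fmap_eq, Quaternion.ext_iff]

/-- For `x`, `y`, `z` on the unit sphere `S³ ⊂ ℍ`, the vector `F(x,y,z)` vanishes if
and only if `x`, `y`, `z` are collinear in `ℝ⁴`; in particular `F(x,y,z) ≠ 0` whenever
`x`, `y`, `z` are pairwise distinct points of `S³`. -/
theorem Fmap_eq_zero_iff_collinear (x y z : ℍ[ℝ])
    (hx : ‖x‖ = 1) (hy : ‖y‖ = 1) (hz : ‖z‖ = 1) :
    (Fmap x y z = 0 ↔ Collinear ℝ ({x, y, z} : Set ℍ[ℝ])) ∧
      (x ≠ y → y ≠ z → x ≠ z → Fmap x y z ≠ 0) := by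
  have hF : Fmap x y z = 0 ↔ Collinear ℝ ({x, y, z} : Set ℍ[ℝ]) := by
    rw [Fmap_eq_zero_iff, Quaternion.im_mul_star_eq_zero_iff,
      collinear_iff_not_linearIndependent_vsub, vsub_eq_sub, vsub_eq_sub]
  refine ⟨hF, fun hxy hyz hxz h0 => ?_⟩
  have hsphere : EuclideanGeometry.Cospherical ({x, y, z} : Set ℍ[ℝ]) :=
    ⟨0, 1, by simp [hx, hy, hz]⟩
  exact affineIndependent_iff_not_collinear_set.1 (hsphere.affineIndependent_of_ne hxy hxz hyz)
    (hF.1 h0)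
end
end

section
/- With F : ℍ × ℍ × ℍ → ℝ³ defined by F(x,y,z) = (x·iy + y·iz + z·ix, x·jy + y·jz + z·jx, x·ky + y·kz + z·kx), the Euclidean norm ‖F(x,y,z)‖ equals twice the area of the triangle in ℝ⁴ with vertices x, y, z, i.e. ‖F(x,y,z)‖ = ‖(y−x) ∧ (z−x)‖ where ∧ denotes the exterior product norm: ‖u ∧ v‖² = ‖u‖²‖v‖² − (u·v)². -/
open scoped Quaternion
noncomputable section

/-!
Each map `(a, b) ↦ a · (q b)` with `q` purely imaginary is an alternating bilinear form on `ℝ⁴`,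
so the cyclic sum defining `F(x, y, z)` is the value of these three forms on `(y − x, z − x)`.
For `v ≠ 0` the quaternions `v, iv, jv, kv` form an orthogonal basis of `ℍ`, all of norm `‖v‖`,
so Parseval gives `‖u‖²‖v‖² = (u·v)² + (u·iv)² + (u·jv)² + (u·kv)²`, which is the claim.
-/

open Quaternion
open scoped RealInnerProductSpace

theorem qdot_eq_inner (a b : ℍ[ℝ]) : qdot a b = ⟪a, b⟫ :=
  (inner_def a b).symm

theorem qdot_mul_left_eq_neg {q : ℍ[ℝ]} (hq : q.re = 0) (a b : ℍ[ℝ]) :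
    qdot a (q * b) = -qdot b (q * a) := by
  simp only [qdot, re_mul, re_star, imI_star, imJ_star, imK_star, imI_mul, imJ_mul, imK_mul, hq]
  ring

theorem qdot_cyclic_sum_eq {q : ℍ[ℝ]} (hq : q.re = 0) (x y z : ℍ[ℝ]) :
    qdot x (q * y) + qdot y (q * z) + qdot z (q * x) = qdot (y - x) (q * (z - x)) := by
  have hxy := qdot_mul_left_eq_neg hq x y
  have hxz := qdot_mul_left_eq_neg hq x z
  have hxx := qdot_mul_left_eq_neg hq x x
  simp only [qdot_eq_inner, mul_sub, inner_sub_left, inner_sub_right] at *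
  linarith

theorem Fmap_eq_s7 (x y z : ℍ[ℝ]) :
    Fmap x y z = (qdot (y - x) (qi * (z - x)), qdot (y - x) (qj * (z - x)),
      qdot (y - x) (qk * (z - x))) := by
  simp only [Fmap, qdot_cyclic_sum_eq (rfl : qi.re = 0), qdot_cyclic_sum_eq (rfl : qj.re = 0),
    qdot_cyclic_sum_eq (rfl : qk.re = 0)]

theorem qdot_qi_mul_sq_add_qdot_qj_mul_sq_add_qdot_qk_mul_sq (u v : ℍ[ℝ]) :
    qdot u (qi * v) ^ 2 + qdot u (qj * v) ^ 2 + qdot u (qk * v) ^ 2 =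
      ‖u‖ ^ 2 * ‖v‖ ^ 2 - qdot u v ^ 2 := by
  simp only [← real_inner_self_eq_norm_sq, ← qdot_eq_inner]
  simp only [qdot, re_mul, re_star, imI_star, imJ_star, imK_star, imI_mul, imJ_mul, imK_mul]
  simp only [qi, qj, qk]
  ring

theorem norm_Fmap_eq_twice_triangle_area_general (x y z : ℍ[ℝ]) :
    Real.sqrt ((Fmap x y z).1 ^ 2 + (Fmap x y z).2.1 ^ 2 + (Fmap x y z).2.2 ^ 2) =
      Real.sqrt (‖y - x‖ ^ 2 * ‖z - x‖ ^ 2 - qdot (y - x) (z - x) ^ 2) := by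
  rw [Fmap_eq_s7, qdot_qi_mul_sq_add_qdot_qj_mul_sq_add_qdot_qk_mul_sq]

/-- For `x`, `y`, `z` on the unit sphere `S³ ⊂ ℍ`, the Euclidean norm of `F(x,y,z)`
equals twice the area of the triangle in `ℝ⁴` with vertices `x`, `y`, `z`, namely
`‖(y−x) ∧ (z−x)‖ = √(‖y−x‖²‖z−x‖² − ((y−x)·(z−x))²)`. -/
theorem norm_Fmap_eq_twice_triangle_area (x y z : ℍ[ℝ])
    (hx : ‖x‖ = 1) (hy : ‖y‖ = 1) (hz : ‖z‖ = 1) :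
    Real.sqrt ((Fmap x y z).1 ^ 2 + (Fmap x y z).2.1 ^ 2 + (Fmap x y z).2.2 ^ 2) =
      Real.sqrt (‖y - x‖ ^ 2 * ‖z - x‖ ^ 2 - qdot (y - x) (z - x) ^ 2) :=
  norm_Fmap_eq_twice_triangle_area_general x y z
end
end
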